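/- arXiv:2112.07856 — 3 statements merged into one kernel-verified Lean document; each statement's English description precedes it below -/
import Mathlib

section
/- Among all orthogonal projections P of rank at most k on ℝ^N, the projection onto the span of the first k left singular vectors of the snapshot matrix X minimizes the total squared reconstruction error Σ_{j=1}^M ‖x_j − P x_j‖² (L2-optimality of the POD basis). -/
/-!
For an orthogonal projection `P` the reconstruction error is `tr (X Xᵀ) - tr (P X Xᵀ)`, and
`X Xᵀ = U diag(σᵢ²) Uᵀ`, so `tr (P X Xᵀ) = ∑ᵢ cᵢ σᵢ²` where `cᵢ` is the diagonal of `Uᵀ P U`.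
For `P = Q Qᵀ` of rank `k` these weights satisfy `0 ≤ cᵢ ≤ 1` and `∑ cᵢ = k`; since the `σᵢ²`
decrease, such a weighted sum is largest when `cᵢ = 1` exactly for `i < k`, which is the
diagonal of `Uᵀ P U` for the POD projection.
-/

open Matrix Finset

theorem sum_mul_le_sum_of_threshold {ι : Type*} [Fintype ι] (s : Finset ι) (w c : ι → ℝ) (t : ℝ)
    (hws : ∀ i ∈ s, t ≤ w i) (hwsc : ∀ i ∉ s, w i ≤ t)
    (hc0 : ∀ i, 0 ≤ c i) (hc1 : ∀ i, c i ≤ 1) (hc : ∑ i, c i = #s) :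
    ∑ i, c i * w i ≤ ∑ i ∈ s, w i := by
  classical
  have hterm : ∀ i, (c i - if i ∈ s then 1 else 0) * (w i - t) ≤ 0 := by
    intro i
    by_cases hi : i ∈ s
    · simpa [hi] using
        mul_nonpos_of_nonpos_of_nonneg (sub_nonpos.2 (hc1 i)) (sub_nonneg.2 (hws i hi))
    · simpa [hi] using mul_nonpos_of_nonneg_of_nonpos (hc0 i) (sub_nonpos.2 (hwsc i hi))
  have hsum : ∑ i, (c i - if i ∈ s then 1 else 0) * (w i - t)
      = ∑ i, c i * w i - ∑ i ∈ s, w i := by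
    simp only [sub_mul, mul_sub, Finset.sum_sub_distrib, ite_mul, one_mul, zero_mul,
      Finset.sum_ite_mem, univ_inter, ← Finset.sum_mul, hc, Finset.sum_const, nsmul_eq_mul]
    ring
  linarith [hsum ▸ Finset.sum_nonpos fun i _ => hterm i]

theorem Antitone.ite_lt_sq {σ : ℕ → ℝ} (hσ : Antitone σ) (hσ0 : ∀ i, 0 ≤ σ i) (M : ℕ) :
    Antitone fun i => if i < M then σ i ^ 2 else 0 := by
  intro i j hij
  dsimp only
  split_ifs with hj hi hi
  · exact pow_le_pow_left₀ (hσ0 j) (hσ hij) 2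
  · omega
  · positivity
  · rfl

def rectDiag (N M : ℕ) (σ : ℕ → ℝ) : Matrix (Fin N) (Fin M) ℝ :=
  of fun i j => if (i : ℕ) = j then σ i else 0

theorem rectDiag_mul_transpose (N M : ℕ) (σ : ℕ → ℝ) :
    rectDiag N M σ * (rectDiag N M σ)ᵀ
      = diagonal fun i : Fin N => if (i : ℕ) < M then σ i ^ 2 else 0 := by
  ext i i'
  simp only [rectDiag, mul_apply, transpose_apply, of_apply, diagonal_apply, ite_mul, zero_mul,
    mul_ite, mul_zero]
  rw [Fin.sum_univ_eq_sum_range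
    (fun j => if (i' : ℕ) = j then if (i : ℕ) = j then σ i * σ i' else 0 else 0)]
  by_cases h : (i : ℕ) = i' <;> simp [Finset.sum_ite_eq, Fin.ext_iff, sq, h]

theorem mul_transpose_self_of_eq_mul_mul_transpose {a b c d : Type*} [Fintype b] [Fintype c]
    [Fintype d] [DecidableEq c] {X : Matrix a d ℝ} {U : Matrix a b ℝ} {S : Matrix b c ℝ}
    {V : Matrix d c ℝ} (hV : Vᵀ * V = 1) (hX : X = U * S * Vᵀ) :
    X * Xᵀ = U * (S * Sᵀ) * Uᵀ := by
  rw [hX]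
  simp only [transpose_mul, transpose_transpose, Matrix.mul_assoc]
  rw [← Matrix.mul_assoc Vᵀ, hV, Matrix.one_mul]

theorem isSymm_mul_transpose {m n : Type*} [Fintype m] (Q : Matrix n m ℝ) :
    (Q * Qᵀ).IsSymm := by
  simp [IsSymm, transpose_mul]

theorem isIdempotentElem_mul_transpose {m n : Type*} [Fintype m] [Fintype n] [DecidableEq m]
    {Q : Matrix n m ℝ} (hQ : Qᵀ * Q = 1) : IsIdempotentElem (Q * Qᵀ) := by
  rw [IsIdempotentElem, Matrix.mul_assoc, ← Matrix.mul_assoc Qᵀ, hQ, Matrix.one_mul]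

theorem isIdempotentElem_diagonal_ite {n : Type*} [Fintype n] [DecidableEq n] (s : Finset n) :
    IsIdempotentElem (diagonal fun i => if i ∈ s then (1 : ℝ) else 0) := by
  rw [IsIdempotentElem, diagonal_mul_diagonal]
  congr 1
  ext i
  split_ifs <;> simp

theorem Matrix.IsSymm.mul_mul_transpose {m n : Type*} [Fintype m] {P : Matrix m m ℝ}
    (hP : P.IsSymm) (U : Matrix n m ℝ) : (U * P * Uᵀ).IsSymm := by
  simp [IsSymm, transpose_mul, hP.eq, Matrix.mul_assoc]

theorem IsIdempotentElem.mul_mul_transpose {m n : Type*} [Fintype m] [Fintype n]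
    [DecidableEq m] {P : Matrix m m ℝ} (hP : IsIdempotentElem P) {U : Matrix n m ℝ}
    (hU : Uᵀ * U = 1) : IsIdempotentElem (U * P * Uᵀ) := by
  rw [IsIdempotentElem]
  calc U * P * Uᵀ * (U * P * Uᵀ) = U * (P * (Uᵀ * U) * P) * Uᵀ := by
        simp only [Matrix.mul_assoc]
    _ = U * P * Uᵀ := by rw [hU, Matrix.mul_one, hP.eq]

theorem transpose_mul_mul_mul_transpose_mul {m n : Type*} [Fintype m] [Fintype n]
    [DecidableEq m] {U : Matrix n m ℝ} (hU : Uᵀ * U = 1) (A : Matrix m m ℝ) :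
    Uᵀ * (U * A * Uᵀ) * U = A := by
  simp only [← Matrix.mul_assoc, hU, Matrix.one_mul]
  rw [Matrix.mul_assoc, hU, Matrix.mul_one]

theorem mul_diagonal_mul_transpose_mul_apply {l m n : Type*} [Fintype m] [Fintype n]
    [DecidableEq m] (U : Matrix n m ℝ) (e : m → ℝ) (X : Matrix n l ℝ) (a : n) (j : l) :
    (U * diagonal e * Uᵀ * X) a j = ∑ i, U a i * (e i * ∑ k, U k i * X k j) := by
  simp only [Matrix.mul_assoc, mul_apply (M := U), diagonal_mul, mul_apply (M := Uᵀ),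
    transpose_apply]

theorem sum_sum_sq_eq_trace_transpose_mul_self {m n : Type*} [Fintype m] [Fintype n]
    (Y : Matrix n m ℝ) : ∑ j, ∑ i, Y i j ^ 2 = trace (Yᵀ * Y) := by
  simp [trace, mul_apply, sq]

theorem sum_sq_sub_mul_eq_trace_sub {m n : Type*} [Fintype m] [Fintype n] {P : Matrix n n ℝ}
    (hPs : P.IsSymm) (hPP : IsIdempotentElem P) (X : Matrix n m ℝ) :
    ∑ j, ∑ i, (X i j - (P * X) i j) ^ 2 = trace (X * Xᵀ) - trace (P * (X * Xᵀ)) := by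
  have hPPX : P * (P * X) = P * X := by rw [← Matrix.mul_assoc, hPP.eq]
  have hres : (X - P * X)ᵀ * (X - P * X) = Xᵀ * X - Xᵀ * (P * X) := by
    simp only [transpose_sub, transpose_mul, hPs.eq, Matrix.sub_mul, Matrix.mul_sub,
      Matrix.mul_assoc, hPPX]
    abel
  calc ∑ j, ∑ i, (X i j - (P * X) i j) ^ 2 = trace ((X - P * X)ᵀ * (X - P * X)) :=
        sum_sum_sq_eq_trace_transpose_mul_self (X - P * X)
    _ = trace (Xᵀ * X) - trace (Xᵀ * (P * X)) := by rw [hres, trace_sub]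
    _ = trace (X * Xᵀ) - trace (P * (X * Xᵀ)) := by
        rw [trace_mul_comm Xᵀ X, trace_mul_comm Xᵀ, Matrix.mul_assoc]

theorem trace_mul_mul_diagonal_mul_transpose {n : Type*} [Fintype n] [DecidableEq n]
    (P U : Matrix n n ℝ) (w : n → ℝ) :
    trace (P * (U * diagonal w * Uᵀ)) = ∑ i, (Uᵀ * P * U) i i * w i := by
  rw [← Matrix.mul_assoc, trace_mul_comm, ← Matrix.mul_assoc, ← Matrix.mul_assoc]
  simp [trace, mul_diagonal]

theorem sum_sq_sub_mul_eq_of_mul_transpose_eq {m n : Type*} [Fintype m] [Fintype n]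
    [DecidableEq n] {P : Matrix n n ℝ} (hPs : P.IsSymm) (hPP : IsIdempotentElem P)
    {X : Matrix n m ℝ} {U : Matrix n n ℝ} {w : n → ℝ} (hXX : X * Xᵀ = U * diagonal w * Uᵀ) :
    ∑ j, ∑ i, (X i j - (P * X) i j) ^ 2 = trace (X * Xᵀ) - ∑ i, (Uᵀ * P * U) i i * w i := by
  rw [sum_sq_sub_mul_eq_trace_sub hPs hPP, hXX, trace_mul_mul_diagonal_mul_transpose]

theorem diag_transpose_mul_mul_nonneg {m n : Type*} [Fintype n] {P : Matrix n n ℝ}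
    (hPs : P.IsSymm) (hPP : IsIdempotentElem P) (A : Matrix n m ℝ) (i : m) :
    0 ≤ (Aᵀ * P * A) i i := by
  have hPPA : P * (P * A) = P * A := by rw [← Matrix.mul_assoc, hPP.eq]
  have h : Aᵀ * P * A = (P * A)ᵀ * (P * A) := by
    simp only [transpose_mul, hPs.eq, Matrix.mul_assoc, hPPA]
  rw [h, mul_apply]
  exact Finset.sum_nonneg fun j _ => mul_self_nonneg _

theorem diag_transpose_mul_mul_le_one {m n : Type*} [Fintype n] [DecidableEq n] [DecidableEq m]
    {P : Matrix n n ℝ} (hPs : P.IsSymm) (hPP : IsIdempotentElem P) {U : Matrix n m ℝ}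
    (hU : Uᵀ * U = 1) (i : m) : (Uᵀ * P * U) i i ≤ 1 := by
  have h := diag_transpose_mul_mul_nonneg (isSymm_one.sub hPs) hPP.one_sub U i
  rw [Matrix.mul_sub, Matrix.sub_mul, Matrix.mul_one, hU] at h
  simpa using h

theorem sum_diag_transpose_mul_mul_transpose_mul_eq_card {m n : Type*} [Fintype m] [Fintype n]
    [DecidableEq m] [DecidableEq n] {U : Matrix n n ℝ} (hU : Uᵀ * U = 1) {Q : Matrix n m ℝ}
    (hQ : Qᵀ * Q = 1) : ∑ i, (Uᵀ * (Q * Qᵀ) * U) i i = Fintype.card m := by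
  change trace _ = _
  rw [trace_mul_comm, ← Matrix.mul_assoc, mul_eq_one_comm.mp hU, Matrix.one_mul, trace_mul_comm,
    hQ, trace_one]

/-- L2-optimality of the POD basis: among all rank-≤k orthogonal projections
QQᵀ, the projection onto the span of the first k left singular vectors of X
minimizes the total squared reconstruction error of the columns of X. -/
theorem pod_optimality
    (N M k : ℕ) (hk : k ≤ min N M)
    (X : Matrix (Fin N) (Fin M) ℝ)
    (U : Matrix (Fin N) (Fin N) ℝ) (V : Matrix (Fin M) (Fin M) ℝ)
    (σ : ℕ → ℝ)
    (hU : Uᵀ * U = 1) (hV : Vᵀ * V = 1)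
    (hσnonneg : ∀ i, 0 ≤ σ i)
    (hσdec : ∀ i j, i ≤ j → σ j ≤ σ i)
    (hSVD : X = U * (Matrix.of fun (i : Fin N) (j : Fin M) =>
        if (i : ℕ) = (j : ℕ) then σ (i : ℕ) else 0) * Vᵀ)
    (Q : Matrix (Fin N) (Fin k) ℝ) (hQ : Qᵀ * Q = 1) :
    ∑ j : Fin M, ∑ n : Fin N,
        (X n j - ∑ i : Fin N, if (i : ℕ) < k then
            U n i * (∑ m : Fin N, U m i * X m j) else 0) ^ 2
      ≤ ∑ j : Fin M, ∑ n : Fin N,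
        (X n j - ((Q * Qᵀ) *ᵥ (fun m => X m j)) n) ^ 2 := by
  have hkN : k ≤ N := hk.trans (min_le_left N M)
  set w : ℕ → ℝ := fun i => if i < M then σ i ^ 2 else 0
  set s : Finset (Fin N) := {i | (i : ℕ) < k} with hs
  set D : Matrix (Fin N) (Fin N) ℝ := diagonal fun i => if i ∈ s then 1 else 0 with hD
  have hXX : X * Xᵀ = U * diagonal (fun i : Fin N => w i) * Uᵀ := by
    rw [mul_transpose_self_of_eq_mul_mul_transpose (S := rectDiag N M σ) hV hSVD,
      rectDiag_mul_transpose]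
  have hLHS : ∀ j n, (∑ i : Fin N, if (i : ℕ) < k then U n i * (∑ m : Fin N, U m i * X m j)
      else 0) = (U * D * Uᵀ * X) n j := by
    intro j n
    simp [hD, hs, mul_diagonal_mul_transpose_mul_apply]
  have hRHS : ∀ j n, ((Q * Qᵀ) *ᵥ (fun m => X m j)) n = (Q * Qᵀ * X) n j := fun _ _ => rfl
  have hQQs := isSymm_mul_transpose Q
  have hQQidem := isIdempotentElem_mul_transpose hQ
  simp only [hLHS, hRHS]
  rw [sum_sq_sub_mul_eq_of_mul_transpose_eq ((isSymm_diagonal _).mul_mul_transpose U)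
      ((isIdempotentElem_diagonal_ite s).mul_mul_transpose hU) hXX,
    sum_sq_sub_mul_eq_of_mul_transpose_eq hQQs hQQidem hXX,
    transpose_mul_mul_mul_transpose_mul hU]
  have hDw : ∑ i, D i i * w i = ∑ i ∈ s, w i := by simp [hD, ite_mul, Finset.sum_ite_mem]
  have htrace : ∑ i, (Uᵀ * (Q * Qᵀ) * U) i i = #s := by
    rw [sum_diag_transpose_mul_mul_transpose_mul_eq_card hU hQ, Fintype.card_fin, hs,
      Fin.card_filter_val_lt, min_eq_right hkN]
  have hw : Antitone w := Antitone.ite_lt_sq hσdec hσnonneg M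
  rw [hDw]
  refine sub_le_sub_left ?_ _
  -- `w` is indexed by `ℕ` so that the threshold `w k` exists also when `k = N`.
  refine sum_mul_le_sum_of_threshold s _ _ (w k) (fun i hi => hw ?_) (fun i hi => hw ?_)
    (diag_transpose_mul_mul_nonneg hQQs hQQidem U)
    (diag_transpose_mul_mul_le_one hQQs hQQidem hU) htrace
  · exact (by simpa [hs] using hi : (i : ℕ) < k).le
  · simpa [hs] using hi
end

section
/- In the linear setting, the unique minimizer of the 4D-Var cost is x₀ᵃ = (B₀⁻¹ + Σ_{i=1}^T M_iᵀHᵀR_i⁻¹HM_i)⁻¹ (B₀⁻¹ x₀ᵇ + Σ_{i=1}^T M_iᵀHᵀR_i⁻¹ y_i); i.e., this point satisfies ∇J(x₀ᵃ) = 0 and J(x₀ᵃ) ≤ J(x) for all x. -/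
/-!
Writing `A` for the Hessian `B₀⁻¹ + Σ Mᵢᵀ Hᵀ Rᵢ⁻¹ H Mᵢ`, the cost is a quadratic polynomial whose
expansion around any point `a` reads `J (a + u) = J a + u ⬝ (A a - b) + ½ uᵀ A u`. At the solution of
the normal equations `A a = b` the linear term drops out, and `A` is positive definite, so `a` is
a global minimizer; the gradient then vanishes there by Fermat's rule.
-/

open Matrix Finset

namespace Matrix

variable {ι κ R : Type*} [Fintype ι] [Fintype κ] [CommRing R]

theorem IsSymm.dotProduct_mulVec_comm {S : Matrix κ κ R} (hS : S.IsSymm) (a b : κ → R) :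
    a ⬝ᵥ S *ᵥ b = b ⬝ᵥ S *ᵥ a := by
  rw [dotProduct_mulVec, ← mulVec_transpose, hS.eq, dotProduct_comm]

theorem IsSymm.add_dotProduct_mulVec_add {S : Matrix κ κ R} (hS : S.IsSymm) (r v : κ → R) :
    (r + v) ⬝ᵥ S *ᵥ (r + v) = r ⬝ᵥ S *ᵥ r + 2 * (v ⬝ᵥ S *ᵥ r) + v ⬝ᵥ S *ᵥ v := by
  rw [mulVec_add, dotProduct_add, add_dotProduct, add_dotProduct, hS.dotProduct_mulVec_comm r v]
  ring

theorem mulVec_dotProduct_mulVec (G : Matrix κ ι R) (S : Matrix κ κ R) (u : ι → R)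
    (w : κ → R) : (G *ᵥ u) ⬝ᵥ S *ᵥ w = u ⬝ᵥ (Gᵀ * S) *ᵥ w := by
  rw [← mulVec_mulVec, dotProduct_mulVec u, vecMul_transpose]

end Matrix

section FourDVar

variable {ι κ τ : Type*} [Fintype ι] [Fintype κ] [Fintype τ]
  (B : Matrix ι ι ℝ) (R : τ → Matrix κ κ ℝ) (G : τ → Matrix κ ι ℝ) (xb : ι → ℝ) (y : τ → κ → ℝ)

/-- `B` and `R i` play the roles of `B₀⁻¹` and `Rᵢ⁻¹`, and `G i` that of `H Mᵢ`. -/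
noncomputable def fourDVarCost (x : ι → ℝ) : ℝ :=
  1 / 2 * ((x - xb) ⬝ᵥ B *ᵥ (x - xb)) +
    1 / 2 * ∑ i, (G i *ᵥ x - y i) ⬝ᵥ R i *ᵥ (G i *ᵥ x - y i)

def fourDVarHessian : Matrix ι ι ℝ := B + ∑ i, (G i)ᵀ * R i * G i

def fourDVarNormalRhs : ι → ℝ := B *ᵥ xb + ∑ i, ((G i)ᵀ * R i) *ᵥ y i

variable {B R}

theorem fourDVarCost_add (hB : B.IsSymm) (hR : ∀ i, (R i).IsSymm) (a u : ι → ℝ) :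
    fourDVarCost B R G xb y (a + u) = fourDVarCost B R G xb y a +
      u ⬝ᵥ (fourDVarHessian B R G *ᵥ a - fourDVarNormalRhs B R G xb y) +
      1 / 2 * (u ⬝ᵥ fourDVarHessian B R G *ᵥ u) := by
  have hbackground : a + u - xb = (a - xb) + u := by abel
  have hresidual : ∀ i, G i *ᵥ (a + u) - y i = (G i *ᵥ a - y i) + G i *ᵥ u := fun i => by
    rw [mulVec_add, add_sub_right_comm]
  have hterm : ∀ i, ((G i *ᵥ a - y i) + G i *ᵥ u) ⬝ᵥ R i *ᵥ ((G i *ᵥ a - y i) + G i *ᵥ u) =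
      (G i *ᵥ a - y i) ⬝ᵥ R i *ᵥ (G i *ᵥ a - y i) +
        2 * (u ⬝ᵥ ((G i)ᵀ * R i) *ᵥ (G i *ᵥ a - y i)) + u ⬝ᵥ ((G i)ᵀ * R i * G i) *ᵥ u :=
    fun i => by
      rw [(hR i).add_dotProduct_mulVec_add, mulVec_dotProduct_mulVec, mulVec_dotProduct_mulVec,
        mulVec_mulVec]
  have hgradient : B *ᵥ (a - xb) + ∑ i, ((G i)ᵀ * R i) *ᵥ (G i *ᵥ a - y i) =
      fourDVarHessian B R G *ᵥ a - fourDVarNormalRhs B R G xb y := by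
    simp only [fourDVarHessian, fourDVarNormalRhs, mulVec_sub, add_mulVec, sum_mulVec,
      mulVec_mulVec, sum_sub_distrib]
    abel
  rw [← hgradient]
  simp only [fourDVarCost, hbackground, hresidual, hterm, hB.add_dotProduct_mulVec_add,
    sum_add_distrib, ← mul_sum, dotProduct_add, dotProduct_sum, fourDVarHessian,
    add_mulVec, sum_mulVec]
  ring

theorem fourDVarHessian_posDef (hB : B.PosDef) (hR : ∀ i, (R i).PosSemidef) :
    (fourDVarHessian B R G).PosDef := by
  refine hB.add_posSemidef (posSemidef_sum _ fun i _ => ?_)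
  simpa [conjTranspose_eq_transpose_of_trivial] using (hR i).conjTranspose_mul_mul_same (G i)

theorem fourDVarCost_le_of_hessian_mulVec_eq (hB : B.PosDef) (hR : ∀ i, (R i).PosSemidef)
    {a : ι → ℝ} (ha : fourDVarHessian B R G *ᵥ a = fourDVarNormalRhs B R G xb y) (x : ι → ℝ) :
    fourDVarCost B R G xb y a ≤ fourDVarCost B R G xb y x := by
  have hquad := (fourDVarHessian_posDef G hB hR).posSemidef.dotProduct_mulVec_nonneg (x - a)
  have hexpand := fourDVarCost_add G xb y (isHermitian_iff_isSymm.mp hB.isHermitian)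
    (fun i => isHermitian_iff_isSymm.mp (hR i).isHermitian) a (x - a)
  rw [add_sub_cancel, ha, sub_self, dotProduct_zero, add_zero] at hexpand
  rw [hexpand]
  simp only [star_trivial] at hquad
  linarith

end FourDVar

/-- Explicit minimizer of the linear 4D-Var cost: the normal-equations solution
has vanishing gradient (zero Fréchet derivative) and is a global minimizer. -/
theorem fourDVar_linear_minimizer
    (n m T : ℕ)
    (Binv : Matrix (Fin n) (Fin n) ℝ) (Rinv : Fin T → Matrix (Fin m) (Fin m) ℝ)
    (hB : Binv.PosDef) (hR : ∀ i, (Rinv i).PosDef)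
    (Mlin : Fin T → Matrix (Fin n) (Fin n) ℝ) (H : Matrix (Fin m) (Fin n) ℝ)
    (xb : Fin n → ℝ) (y : Fin T → Fin m → ℝ)
    (J : (Fin n → ℝ) → ℝ)
    (hJ : ∀ x, J x = (1/2) * ((x - xb) ⬝ᵥ (Binv *ᵥ (x - xb))) +
      (1/2) * ∑ i, (H *ᵥ (Mlin i *ᵥ x) - y i) ⬝ᵥ (Rinv i *ᵥ (H *ᵥ (Mlin i *ᵥ x) - y i)))
    (xa : Fin n → ℝ)
    (hxa : xa = (Binv + ∑ i, (Mlin i)ᵀ * Hᵀ * Rinv i * H * Mlin i)⁻¹ *ᵥ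
      (Binv *ᵥ xb + ∑ i, ((Mlin i)ᵀ * Hᵀ * Rinv i) *ᵥ y i)) :
    fderiv ℝ J xa = 0 ∧ ∀ x, J xa ≤ J x := by
  let G i := H * Mlin i
  have hRpsd i := (hR i).posSemidef
  have hJG : J = fourDVarCost Binv Rinv G xb y :=
    funext fun x => by simp only [hJ, fourDVarCost, G, mulVec_mulVec]
  have hxaG : xa = (fourDVarHessian Binv Rinv G)⁻¹ *ᵥ fourDVarNormalRhs Binv Rinv G xb y := by
    simp only [hxa, fourDVarHessian, fourDVarNormalRhs, G, transpose_mul, Matrix.mul_assoc]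
  have hnormal : fourDVarHessian Binv Rinv G *ᵥ xa = fourDVarNormalRhs Binv Rinv G xb y := by
    rw [hxaG, mulVec_mulVec, mul_nonsing_inv _ ((isUnit_iff_isUnit_det _).mp
      (fourDVarHessian_posDef G hB hRpsd).isUnit), one_mulVec]
  have hmin : ∀ x, J xa ≤ J x :=
    hJG ▸ fourDVarCost_le_of_hessian_mulVec_eq G xb y hB hRpsd hnormal
  exact ⟨IsLocalMin.fderiv_eq_zero (Filter.Eventually.of_forall hmin), hmin⟩
end

section
/- If an orthogonal projection Π on ℝ^N has rank k, then for any matrix X ∈ ℝ^{N×M}, ‖X − ΠX‖_F² ≥ Σ_{i=k+1}^{min(N,M)} σ_i(X)², with equality when Π projects onto the top-k left singular subspace (Eckart–Young for projections). -/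
/-!
With `s a = σ a ^ 2` (and `0` past `M`) we have `X Xᵀ = U diag(s) Uᵀ`. For an orthogonal projection
`P`, `‖X - P X‖_F² = tr((1 - P) X Xᵀ) = ∑ₐ dₐ sₐ`, where the `dₐ` are the diagonal entries of the
projection `Uᵀ (1 - P) U`: they lie in `[0, 1]` and sum to `N - rank P`. Since `s` is decreasing,
such a weighted sum is smallest when the whole weight sits on the last `N - k` indices, which gives
the tail `∑_{a ≥ k} sₐ`; the projection onto the first `k` columns of `U` has exactly these weights.
-/

open Matrix Finset

theorem IsStarProjection.star_mul_mul {R : Type*} [Monoid R] [StarMul R] {p u : R}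
    (hp : IsStarProjection p) (hu : u * star u = 1) : IsStarProjection (star u * p * u) where
  isIdempotentElem :=
    calc star u * p * u * (star u * p * u) = star u * (p * (u * star u) * p) * u := by
          simp only [mul_assoc]
      _ = star u * p * u := by rw [hu, mul_one, hp.isIdempotentElem.eq]
  isSelfAdjoint := by
    rw [IsSelfAdjoint, star_mul, star_mul, star_star, hp.isSelfAdjoint.star_eq, mul_assoc]

namespace Matrix

variable {m n : Type*} [Fintype m] [Fintype n]

theorem isStarProjection_of_transpose_eq {P : Matrix n n ℝ} (hT : Pᵀ = P) (hP : P * P = P) :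
    IsStarProjection P :=
  ⟨hP, by rw [IsSelfAdjoint, star_eq_conjTranspose, conjTranspose_eq_transpose_of_trivial, hT]⟩

theorem transpose_eq_of_isStarProjection {P : Matrix n n ℝ} (hP : IsStarProjection P) :
    Pᵀ = P := by
  rw [← conjTranspose_eq_transpose_of_trivial, ← star_eq_conjTranspose, hP.isSelfAdjoint.star_eq]

theorem sum_sq_eq_trace_mul_transpose {R : Type*} [CommSemiring R] (A : Matrix m n R) :
    ∑ i, ∑ j, A i j ^ 2 = (A * Aᵀ).trace := by
  simp [trace, mul_apply, sq]

theorem trace_mul_mul_transpose_of_isStarProjection {Q : Matrix n n ℝ}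
    (hQ : IsStarProjection Q) (X : Matrix n m ℝ) :
    ((Q * X) * (Q * X)ᵀ).trace = (Q * (X * Xᵀ)).trace := by
  rw [transpose_mul, transpose_eq_of_isStarProjection hQ,
    show Q * X * (Xᵀ * Q) = Q * (X * Xᵀ) * Q by simp only [Matrix.mul_assoc],
    trace_mul_comm, ← Matrix.mul_assoc, hQ.isIdempotentElem.eq]

theorem svd_mul_transpose_self {R : Type*} [CommSemiring R] [DecidableEq m] {V : Matrix m m R}
    (hV : Vᵀ * V = 1) (U : Matrix n n R) (S : Matrix n m R) :
    (U * S * Vᵀ) * (U * S * Vᵀ)ᵀ = U * (S * Sᵀ) * Uᵀ := by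
  simp only [transpose_mul, transpose_transpose, Matrix.mul_assoc]
  rw [← Matrix.mul_assoc Vᵀ, hV, Matrix.one_mul]

variable [DecidableEq n]

open scoped ComplexOrder MatrixOrder in
theorem diag_mem_Icc_of_isStarProjection {𝕜 : Type*} [RCLike 𝕜] {P : Matrix n n 𝕜}
    (hP : IsStarProjection P) (i : n) : P i i ∈ Set.Icc 0 1 := by
  obtain ⟨h0, h1⟩ := hP.mem_Icc
  have h1' := (nonneg_iff_posSemidef.mp (sub_nonneg.mpr h1)).diag_nonneg (i := i)
  rw [sub_apply, one_apply_eq, sub_nonneg] at h1'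
  exact ⟨(nonneg_iff_posSemidef.mp h0).diag_nonneg, h1'⟩

theorem trace_eq_rank_of_isIdempotentElem {K : Type*} [Field K] {P : Matrix n n K}
    (hP : IsIdempotentElem P) : P.trace = P.rank := by
  have hP' : IsIdempotentElem (toLin' P) := hP.map toLinAlgEquiv'
  rw [← trace_toLin'_eq, (LinearMap.IsIdempotentElem.isProj_range _ hP').trace]
  rfl

theorem trace_one_sub_of_isIdempotentElem {K : Type*} [Field K] {P : Matrix n n K}
    (hP : IsIdempotentElem P) : (1 - P).trace = (Fintype.card n - P.rank : ℕ) := by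
  rw [trace_sub, trace_one, trace_eq_rank_of_isIdempotentElem hP,
    Nat.cast_sub (rank_le_card_width P)]

theorem trace_mul_diagonal {R : Type*} [CommSemiring R] (A : Matrix n n R) (d : n → R) :
    (A * diagonal d).trace = ∑ i, A i i * d i := by
  simp [trace, mul_diagonal]

theorem sum_sq_sub_mul_eq_sum_diag_mul {r : Type*} [Fintype r] [DecidableEq r]
    {P : Matrix n n ℝ} (hP : IsStarProjection P) {X : Matrix n m ℝ} {U : Matrix n r ℝ}
    {s : r → ℝ} (hX : X * Xᵀ = U * diagonal s * Uᵀ) :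
    ∑ i, ∑ j, (X i j - (P * X) i j) ^ 2 = ∑ a, (Uᵀ * (1 - P) * U : Matrix r r ℝ) a a * s a := by
  calc ∑ i, ∑ j, (X i j - (P * X) i j) ^ 2 = (((1 - P) * X) * ((1 - P) * X)ᵀ).trace := by
        rw [← sum_sq_eq_trace_mul_transpose, Matrix.sub_mul, Matrix.one_mul]
        rfl
    _ = (Uᵀ * ((1 - P) * U * diagonal s)).trace := by
        rw [trace_mul_mul_transpose_of_isStarProjection hP.one_sub, hX,
          show (1 - P) * (U * diagonal s * Uᵀ) = ((1 - P) * U * diagonal s) * Uᵀ by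
            simp only [Matrix.mul_assoc], trace_mul_comm]
    _ = _ := by rw [← trace_mul_diagonal]; simp only [Matrix.mul_assoc]

theorem isStarProjection_diagonal_ite (p : n → Prop) [DecidablePred p] :
    IsStarProjection (diagonal fun i => if p i then (1 : ℝ) else 0) :=
  isStarProjection_of_transpose_eq (diagonal_transpose _) (by
    rw [diagonal_mul_diagonal]; congr 1; ext i; split_ifs <;> norm_num)

theorem transpose_mul_one_sub_mul_eq {R : Type*} [CommRing R] {U : Matrix n n R}
    (hU : Uᵀ * U = 1) (E : Matrix n n R) : Uᵀ * (1 - U * E * Uᵀ) * U = 1 - E := by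
  rw [Matrix.mul_sub, Matrix.sub_mul, Matrix.mul_one, hU]
  simp only [← Matrix.mul_assoc, hU, Matrix.one_mul]
  rw [Matrix.mul_assoc _ Uᵀ U, hU, Matrix.mul_one]

end Matrix

theorem Matrix.of_sum_ite_mul_eq {n r : Type*} [Fintype r] [DecidableEq r] {R : Type*}
    [CommSemiring R] (U : Matrix n r R) (p : r → Prop) [DecidablePred p] :
    (of fun a b => ∑ i, if p i then U a i * U b i else 0) =
      U * diagonal (fun i => if p i then (1 : R) else 0) * Uᵀ := by
  ext a b
  rw [of_apply, mul_apply]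
  simp only [mul_diagonal, transpose_apply, mul_ite, mul_one, mul_zero, ite_mul, zero_mul]

def rectDiagonal {R : Type*} [Zero R] (N M : ℕ) (σ : ℕ → R) : Matrix (Fin N) (Fin M) R :=
  of fun i j => if (i : ℕ) = j then σ i else 0

theorem rectDiagonal_mul_transpose {R : Type*} [CommSemiring R] (N M : ℕ) (σ : ℕ → R) :
    rectDiagonal N M σ * (rectDiagonal N M σ)ᵀ =
      diagonal fun a : Fin N => if (a : ℕ) < M then σ a ^ 2 else 0 := by
  ext a b
  simp only [rectDiagonal, mul_apply, transpose_apply, of_apply]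
  rw [Fin.sum_univ_eq_sum_range (fun j => (if (a : ℕ) = j then σ a else 0) *
    (if (b : ℕ) = j then σ b else 0))]
  rcases eq_or_ne a b with rfl | hab
  · simp [sq]
  · simp [hab, Fin.val_ne_of_ne hab]

theorem Fin.sum_ite_le_eq_sum_Ico {M : Type*} [AddCommMonoid M] (n k : ℕ) (f : ℕ → M) :
    ∑ i : Fin n, (if k ≤ (i : ℕ) then f i else 0) = ∑ i ∈ Ico k n, f i := by
  rw [Fin.sum_univ_eq_sum_range (fun i => if k ≤ i then f i else 0), ← sum_filter,
    range_eq_Ico, Ico_filter_le, Nat.zero_max]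

theorem Antitone.ite_lt {α : Type*} [Preorder α] [Zero α] {f : ℕ → α} (hf : Antitone f)
    (hf0 : ∀ i, 0 ≤ f i) (M : ℕ) : Antitone fun i => if i < M then f i else 0 := by
  intro i j hij
  dsimp only
  split_ifs with hj hi hi
  · exact hf hij
  · omega
  · exact hf0 i
  · exact le_rfl

theorem sum_Ico_le_sum_mul_of_antitone {n k : ℕ} {s : ℕ → ℝ} (hs : Antitone s) (hsk : 0 ≤ s k)
    {d : Fin n → ℝ} (hd : ∀ i, d i ∈ Set.Icc 0 1) (hsum : ((n - k : ℕ) : ℝ) ≤ ∑ i, d i) :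
    ∑ i ∈ Ico k n, s i ≤ ∑ i, d i * s i := by
  have hcard : ∑ i : Fin n, (if k ≤ (i : ℕ) then (1 : ℝ) else 0) = (n - k : ℕ) :=
    (Fin.sum_ite_le_eq_sum_Ico n k fun _ => (1 : ℝ)).trans (by simp)
  -- `d i - [k ≤ i]` and `s i - s k` are both `≥ 0` for `i < k` and both `≤ 0` for `k ≤ i`.
  have hpointwise : ∀ i : Fin n, (if k ≤ (i : ℕ) then s i else 0) +
      s k * (d i - if k ≤ (i : ℕ) then 1 else 0) ≤ d i * s i := by
    intro i
    obtain ⟨hd0, hd1⟩ := hd i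
    split_ifs with hki
    · nlinarith [hs hki]
    · nlinarith [hs (le_of_not_ge hki)]
  calc ∑ i ∈ Ico k n, s i ≤ ∑ i ∈ Ico k n, s i + s k * (∑ i, d i - (n - k : ℕ)) :=
        le_add_of_nonneg_right (mul_nonneg hsk (sub_nonneg.2 hsum))
    _ = ∑ i : Fin n, ((if k ≤ (i : ℕ) then s i else 0) +
          s k * (d i - if k ≤ (i : ℕ) then 1 else 0)) := by
        rw [sum_add_distrib, ← mul_sum, sum_sub_distrib, hcard, Fin.sum_ite_le_eq_sum_Ico]
    _ ≤ ∑ i, d i * s i := sum_le_sum fun i _ => hpointwise i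

theorem eckart_young_projection_general
    (N M k : ℕ)
    (X : Matrix (Fin N) (Fin M) ℝ)
    (U : Matrix (Fin N) (Fin N) ℝ) (V : Matrix (Fin M) (Fin M) ℝ)
    (σ : ℕ → ℝ)
    (hU : Uᵀ * U = 1) (hV : Vᵀ * V = 1)
    (hσnonneg : ∀ i, 0 ≤ σ i)
    (hσdec : ∀ i j, i ≤ j → σ j ≤ σ i)
    (hSVD : X = U * (Matrix.of fun (i : Fin N) (j : Fin M) =>
        if (i : ℕ) = (j : ℕ) then σ (i : ℕ) else 0) * Vᵀ) :
    (∀ Pr : Matrix (Fin N) (Fin N) ℝ, Prᵀ = Pr → Pr * Pr = Pr → Pr.rank = k →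
      ∑ i ∈ Finset.Ico k (min N M), σ i ^ 2 ≤
        ∑ i : Fin N, ∑ j : Fin M, (X i j - (Pr * X) i j) ^ 2) ∧
    (∀ Pr0 : Matrix (Fin N) (Fin N) ℝ,
      (Pr0 = Matrix.of fun a b => ∑ i : Fin N,
        if (i : ℕ) < k then U a i * U b i else 0) →
      ∑ i : Fin N, ∑ j : Fin M, (X i j - (Pr0 * X) i j) ^ 2 =
        ∑ i ∈ Finset.Ico k (min N M), σ i ^ 2) := by
  have hUUt : U * Uᵀ = 1 := mul_eq_one_comm.mp hU
  set s : ℕ → ℝ := fun i => if i < M then σ i ^ 2 else 0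
  have hs : Antitone s := Antitone.ite_lt
    (fun i j hij => pow_le_pow_left₀ (hσnonneg j) (hσdec i j hij) 2) (fun i => sq_nonneg _) M
  have hsk : 0 ≤ s k := by dsimp only [s]; split_ifs <;> positivity
  have hXXt : X * Xᵀ = U * diagonal (fun a : Fin N => s a) * Uᵀ := by
    rw [hSVD, svd_mul_transpose_self hV]
    exact congrArg (U * · * Uᵀ) (rectDiagonal_mul_transpose N M σ)
  have htail : ∑ i ∈ Ico k N, s i = ∑ i ∈ Ico k (min N M), σ i ^ 2 := by
    rw [← sum_filter, Ico_filter_lt]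
  refine ⟨fun Pr hT hPP hrank => ?_, fun Pr0 hPr0 => ?_⟩
  · have hP := isStarProjection_of_transpose_eq hT hPP
    have hW : IsStarProjection (Uᵀ * (1 - Pr) * U) := hP.one_sub.star_mul_mul hUUt
    have htrace : ∑ a, (Uᵀ * (1 - Pr) * U) a a = ((N - k : ℕ) : ℝ) := by
      change trace _ = _
      rw [trace_mul_comm, ← Matrix.mul_assoc, hUUt, Matrix.one_mul,
        trace_one_sub_of_isIdempotentElem hPP, hrank, Fintype.card_fin]
    rw [sum_sq_sub_mul_eq_sum_diag_mul hP hXXt, ← htail]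
    exact sum_Ico_le_sum_mul_of_antitone hs hsk (diag_mem_Icc_of_isStarProjection hW) htrace.ge
  · rw [of_sum_ite_mul_eq] at hPr0
    have hP : IsStarProjection Pr0 :=
      hPr0 ▸ (isStarProjection_diagonal_ite _).star_mul_mul (u := Uᵀ) hU
    rw [sum_sq_sub_mul_eq_sum_diag_mul hP hXXt, hPr0, transpose_mul_one_sub_mul_eq hU, ← htail,
      ← Fin.sum_ite_le_eq_sum_Ico]
    refine sum_congr rfl fun a _ => ?_
    simp only [Matrix.sub_apply, one_apply_eq, diagonal_apply_eq]
    split_ifs <;> first | omega | ring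

/-- Eckart–Young for projections: any rank-k orthogonal projection Pr satisfies
‖X − PrX‖_F² ≥ Σ_{i>k} σ_i(X)², with equality for the projection onto the
top-k left singular subspace. -/
theorem eckart_young_projection
    (N M k : ℕ) (hk : k ≤ min N M)
    (X : Matrix (Fin N) (Fin M) ℝ)
    (U : Matrix (Fin N) (Fin N) ℝ) (V : Matrix (Fin M) (Fin M) ℝ)
    (σ : ℕ → ℝ)
    (hU : Uᵀ * U = 1) (hV : Vᵀ * V = 1)
    (hσnonneg : ∀ i, 0 ≤ σ i)
    (hσdec : ∀ i j, i ≤ j → σ j ≤ σ i)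
    (hSVD : X = U * (Matrix.of fun (i : Fin N) (j : Fin M) =>
        if (i : ℕ) = (j : ℕ) then σ (i : ℕ) else 0) * Vᵀ) :
    (∀ Pr : Matrix (Fin N) (Fin N) ℝ, Prᵀ = Pr → Pr * Pr = Pr → Pr.rank = k →
      ∑ i ∈ Finset.Ico k (min N M), σ i ^ 2 ≤
        ∑ i : Fin N, ∑ j : Fin M, (X i j - (Pr * X) i j) ^ 2) ∧
    (∀ Pr0 : Matrix (Fin N) (Fin N) ℝ,
      (Pr0 = Matrix.of fun a b => ∑ i : Fin N,
        if (i : ℕ) < k then U a i * U b i else 0) →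
      ∑ i : Fin N, ∑ j : Fin M, (X i j - (Pr0 * X) i j) ^ 2 =
        ∑ i ∈ Finset.Ico k (min N M), σ i ^ 2) :=
  eckart_young_projection_general N M k X U V σ hU hV hσnonneg hσdec hSVD
end
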